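/- arXiv:1401.7764 — 7 statements merged into one kernel-verified Lean document; each statement's English description precedes it below -/
import Mathlib

section
/- For all real numbers a, b ≥ 0, |cosh a − cosh b| ≥ |a − b| · √(sinh a · sinh b). -/
theorem vanDerCorput_cosh (a b : ℝ) (ha : 0 ≤ a) (hb : 0 ≤ b) :
    |Real.cosh a - Real.cosh b| ≥ |a - b| * Real.sqrt (Real.sinh a * Real.sinh b) := by
  wlog hab : b ≤ a generalizing a b with H
  · rw [abs_sub_comm, abs_sub_comm a b, mul_comm (Real.sinh a)]
    exact H b a hb ha (le_of_not_ge hab)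
  set m := (a + b) / 2 with hm
  set d := (a - b) / 2 with hd
  have hm0 : 0 ≤ m := by positivity
  have hd0 : 0 ≤ d := by rw [hd]; linarith
  have ha' : a = m + d := by rw [hm, hd]; ring
  have hb' : b = m - d := by rw [hm, hd]; ring
  have hcosh : Real.cosh a - Real.cosh b = 2 * Real.sinh m * Real.sinh d := by
    rw [ha', hb', Real.cosh_add, Real.cosh_sub]; ring
  have hprod : Real.sinh a * Real.sinh b ≤ Real.sinh m ^ 2 := by
    have h1 : Real.cosh (a - b) ≥ 1 := Real.one_le_cosh _
    have h2 : Real.cosh a * Real.cosh b - Real.sinh a * Real.sinh b = Real.cosh (a - b) :=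
      (Real.cosh_sub a b).symm
    have h3 : Real.cosh (a + b) = Real.cosh a * Real.cosh b + Real.sinh a * Real.sinh b :=
      Real.cosh_add a b
    have h4 : Real.cosh (a + b) = 2 * Real.sinh m ^ 2 + 1 := by
      have hmm : a + b = m + m := by rw [hm]; ring
      rw [hmm, Real.cosh_add]
      nlinarith [Real.cosh_sq m]
    nlinarith
  have hsnn : 0 ≤ Real.sinh a * Real.sinh b :=
    mul_nonneg (Real.sinh_nonneg_iff.2 ha) (Real.sinh_nonneg_iff.2 hb)
  have hsm : 0 ≤ Real.sinh m := Real.sinh_nonneg_iff.2 hm0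
  have hsd : 0 ≤ Real.sinh d := Real.sinh_nonneg_iff.2 hd0
  have hsqrt : Real.sqrt (Real.sinh a * Real.sinh b) ≤ Real.sinh m := by
    rw [show Real.sinh m = Real.sqrt (Real.sinh m ^ 2) from (Real.sqrt_sq hsm).symm]
    exact Real.sqrt_le_sqrt hprod
  have hdle : d ≤ Real.sinh d := Real.self_le_sinh_iff.2 hd0
  have habs1 : |Real.cosh a - Real.cosh b| = 2 * Real.sinh m * Real.sinh d := by
    rw [hcosh, abs_of_nonneg]; positivity
  have habs2 : |a - b| = 2 * d := by rw [abs_of_nonneg (by linarith), hd]; ring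
  rw [habs1, habs2]
  nlinarith [mul_le_mul_of_nonneg_left hsqrt (by linarith : (0:ℝ) ≤ 2 * d),
    Real.sqrt_nonneg (Real.sinh a * Real.sinh b)]
end

section
/- For all real numbers a, b in the interval [0, π], |cos a − cos b| ≥ |a − b| · √(sin a · sin b). -/
open Real

lemma key_tcos (t : ℝ) (h0 : 0 ≤ t) (h1 : t ≤ π / 2) : t * Real.cos t ≤ Real.sin t := by
  rcases eq_or_lt_of_le h1 with h | h
  · subst h; simp [Real.cos_pi_div_two, Real.sin_pi_div_two]
  · rcases eq_or_lt_of_le h0 with h0 | h0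
    · simp [← h0]
    · have hc : 0 < Real.cos t := Real.cos_pos_of_mem_Ioo ⟨by linarith [Real.pi_pos], h⟩
      have := Real.lt_tan h0 h
      rw [Real.tan_eq_sin_div_cos] at this
      calc t * Real.cos t ≤ (Real.sin t / Real.cos t) * Real.cos t := by
            apply mul_le_mul_of_nonneg_right this.le hc.le
        _ = Real.sin t := by field_simp

lemma vdc_aux (a b : ℝ) (ha : a ∈ Set.Icc 0 Real.pi) (hb : b ∈ Set.Icc 0 Real.pi)
    (hab : a ≤ b) :
    |Real.cos a - Real.cos b| ≥ |a - b| * Real.sqrt (Real.sin a * Real.sin b) := by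
  obtain ⟨ha0, ha1⟩ := ha
  obtain ⟨hb0, hb1⟩ := hb
  set t := (b - a) / 2 with ht
  set s := (a + b) / 2 with hs
  have ht0 : 0 ≤ t := by simp only [ht]; linarith
  have ht1 : t ≤ π / 2 := by simp only [ht]; linarith
  have hs0 : 0 ≤ s := by simp only [hs]; linarith
  have hs1 : s ≤ π := by simp only [hs]; linarith
  have hsins : 0 ≤ Real.sin s := Real.sin_nonneg_of_nonneg_of_le_pi hs0 hs1
  have hsint : 0 ≤ Real.sin t := Real.sin_nonneg_of_nonneg_of_le_pi ht0 (by linarith [Real.pi_pos])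
  have hsa : 0 ≤ Real.sin a := Real.sin_nonneg_of_nonneg_of_le_pi ha0 ha1
  have hsb : 0 ≤ Real.sin b := Real.sin_nonneg_of_nonneg_of_le_pi hb0 hb1
  -- cos a - cos b = 2 sin s sin t
  have hcos : Real.cos a - Real.cos b = 2 * Real.sin s * Real.sin t := by
    rw [Real.cos_sub_cos]
    have : (a - b) / 2 = -t := by rw [ht]; ring
    rw [this, Real.sin_neg, hs]
    ring
  have hsum : Real.sin a + Real.sin b = 2 * Real.sin s * Real.cos t := by
    have haa : a = s - t := by rw [hs, ht]; ring
    have hbb : b = s + t := by rw [hs, ht]; ring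
    rw [haa, hbb, Real.sin_add, Real.sin_sub]; ring
  have hsqrt : Real.sqrt (Real.sin a * Real.sin b) ≤ Real.sin s * Real.cos t := by
    have h1 : Real.sin a * Real.sin b ≤ (Real.sin s * Real.cos t) ^ 2 := by
      nlinarith [sq_nonneg (Real.sin a - Real.sin b)]
    have h2 : 0 ≤ Real.sin s * Real.cos t := by nlinarith
    calc Real.sqrt (Real.sin a * Real.sin b) ≤ Real.sqrt ((Real.sin s * Real.cos t) ^ 2) :=
          Real.sqrt_le_sqrt h1
      _ = Real.sin s * Real.cos t := by rw [Real.sqrt_sq h2]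
  have habs : |a - b| = 2 * t := by
    rw [abs_of_nonpos (by linarith), ht]; ring
  have hkey := key_tcos t ht0 ht1
  rw [hcos, habs, abs_of_nonneg (by positivity)]
  calc 2 * t * Real.sqrt (Real.sin a * Real.sin b)
      ≤ 2 * t * (Real.sin s * Real.cos t) := by
        apply mul_le_mul_of_nonneg_left hsqrt (by linarith)
    _ = 2 * Real.sin s * (t * Real.cos t) := by ring
    _ ≤ 2 * Real.sin s * Real.sin t := by nlinarith

theorem vanDerCorput_cos (a b : ℝ) (ha : a ∈ Set.Icc 0 Real.pi) (hb : b ∈ Set.Icc 0 Real.pi) :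
    |Real.cos a - Real.cos b| ≥ |a - b| * Real.sqrt (Real.sin a * Real.sin b) := by
  rcases le_total a b with h | h
  · exact vdc_aux a b ha hb h
  · have := vdc_aux b a hb ha h
    rwa [abs_sub_comm, mul_comm (Real.sin b), abs_sub_comm b a] at this
end

section
/- Let f : ℝ → ℝ be differentiable on [a, b] with a < b, suppose f' is continuous and strictly positive on [a, b], and suppose log ∘ f' is concave on [a, b]. Then f(b) − f(a) ≥ (b − a) · √(f'(a) · f'(b)). -/
theorem vanDerCorput_logConcave_deriv (a b : ℝ) (hab : a < b) (f f' : ℝ → ℝ)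
    (hderiv : ∀ x ∈ Set.Icc a b, HasDerivAt f (f' x) x)
    (hcont : ContinuousOn f' (Set.Icc a b))
    (hpos : ∀ x ∈ Set.Icc a b, 0 < f' x)
    (hconc : ConcaveOn ℝ (Set.Icc a b) (Real.log ∘ f')) :
    f b - f a ≥ (b - a) * Real.sqrt (f' a * f' b) := by
  have hba : (0:ℝ) < b - a := by linarith
  have ha : a ∈ Set.Icc a b := Set.left_mem_Icc.2 hab.le
  have hb : b ∈ Set.Icc a b := Set.right_mem_Icc.2 hab.le
  -- Pointwise key inequality
  have key : ∀ x ∈ Set.Icc a b,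
      2 * Real.sqrt (f' a * f' b) ≤ f' x + f' (a + b - x) := by
    intro x hx
    have hx' : a + b - x ∈ Set.Icc a b := by
      constructor <;> [linarith [hx.2]; linarith [hx.1]]
    set t : ℝ := (x - a) / (b - a) with ht
    have ht0 : 0 ≤ t := div_nonneg (by linarith [hx.1]) hba.le
    have ht1 : 0 ≤ 1 - t := by
      have : t ≤ 1 := by
        rw [div_le_one hba]; linarith [hx.2]
      linarith
    have htmul : t * (b - a) = x - a := div_mul_cancel₀ _ hba.ne'
    have hxeq : (1 - t) • a + t • b = x := by
      simp only [smul_eq_mul]; nlinarith [htmul]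
    have hxeq' : t • a + (1 - t) • b = a + b - x := by
      simp only [smul_eq_mul]; nlinarith [htmul]
    have h1 := hconc.2 ha hb ht1 ht0 (by ring)
    have h2 := hconc.2 ha hb ht0 ht1 (by ring)
    rw [hxeq] at h1
    rw [hxeq'] at h2
    have hsum : Real.log (f' a) + Real.log (f' b)
        ≤ Real.log (f' x) + Real.log (f' (a + b - x)) := by
      simp only [Function.comp_apply, smul_eq_mul] at h1 h2
      nlinarith [h1, h2]
    have hprod : f' a * f' b ≤ f' x * f' (a + b - x) := by
      have := Real.exp_le_exp.2 hsum
      rwa [Real.exp_add, Real.exp_add, Real.exp_log (hpos a ha),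
        Real.exp_log (hpos b hb), Real.exp_log (hpos x hx),
        Real.exp_log (hpos _ hx')] at this
    have h3 : Real.sqrt (f' a * f' b) ≤ Real.sqrt (f' x * f' (a + b - x)) :=
      Real.sqrt_le_sqrt hprod
    have h4 : 2 * Real.sqrt (f' x * f' (a + b - x)) ≤ f' x + f' (a + b - x) := by
      rw [Real.sqrt_mul (hpos x hx).le]
      nlinarith [Real.sq_sqrt (hpos x hx).le, Real.sq_sqrt (hpos _ hx').le,
        Real.sqrt_nonneg (f' x), Real.sqrt_nonneg (f' (a + b - x)),
        sq_nonneg (Real.sqrt (f' x) - Real.sqrt (f' (a + b - x)))]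
    linarith
  -- Integrability
  have hcont2 : ContinuousOn (fun x => f' (a + b - x)) (Set.Icc a b) := by
    apply hcont.comp (Continuous.continuousOn (by continuity))
    intro x hx
    constructor <;> [linarith [hx.2]; linarith [hx.1]]
  have hint1 : IntervalIntegrable f' MeasureTheory.volume a b :=
    (hcont.mono (by rw [Set.uIcc_of_le hab.le])).intervalIntegrable
  have hint2 : IntervalIntegrable (fun x => f' (a + b - x)) MeasureTheory.volume a b :=
    (hcont2.mono (by rw [Set.uIcc_of_le hab.le])).intervalIntegrable
  -- FTC
  have hftc : ∫ x in a..b, f' x = f b - f a := by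
    apply intervalIntegral.integral_eq_sub_of_hasDerivAt
    · intro x hx
      exact hderiv x (by rwa [Set.uIcc_of_le hab.le] at hx)
    · exact hint1
  -- reflection
  have hrefl : ∫ x in a..b, f' (a + b - x) = ∫ x in a..b, f' x := by
    have := intervalIntegral.integral_comp_sub_left (a := a) (b := b) f' (a + b)
    simpa using this
  -- integrate the key inequality
  have hmono : ∫ x in a..b, (2 * Real.sqrt (f' a * f' b))
      ≤ ∫ x in a..b, (f' x + f' (a + b - x)) := by
    apply intervalIntegral.integral_mono_on hab.le
      intervalIntegrable_const (hint1.add hint2)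
    exact key
  rw [intervalIntegral.integral_const, intervalIntegral.integral_add hint1 hint2,
    hrefl, hftc, smul_eq_mul] at hmono
  nlinarith [hmono]
end

section
/- Let j denote the first positive root of the equation sin x = x·cos x (numerically j ≈ 4.4934). For all a, b ∈ [0, j], |b·sin a − a·sin b| ≥ |a − b| · √((a·cos a − sin a)·(b·cos b − sin b)). -/
/-!
Put `j₁ t = (sin t - t cos t) / t² = -(sin t / t)'`. Then `b sin a - a sin b = a b ∫_a^b j₁`
and `(sin a - a cos a)(sin b - b cos b) = (a b)² j₁(a) j₁(b)`. On `(0, j)` the function `j₁`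
is positive and log-concave, so `j₁(t) j₁(a + b - t) ≥ j₁(a) j₁(b)` for `t ∈ [a, b]`, and by
AM-GM the mean of `j₁` over `[a, b]` is at least `√(j₁(a) j₁(b))`. Log-concavity amounts to
`2 (sin t - t cos t)² ≤ t² (t² - sin² t)`, which follows from Taylor bounds for `t ≤ 2` and
from `(sin t - t cos t)² ≤ 1 + t²` beyond.
-/

open Real Set

namespace VanDerCorput

lemma le_of_hasDerivAt_le {f g f' g' : ℝ → ℝ} {a x : ℝ}
    (hf : ∀ y, HasDerivAt f (f' y) y) (hg : ∀ y, HasDerivAt g (g' y) y)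
    (ha : f a ≤ g a) (hderiv : ∀ y, a < y → f' y ≤ g' y) (hx : a ≤ x) : f x ≤ g x := by
  have hmono : MonotoneOn (fun y => g y - f y) (Ici a) := by
    refine monotoneOn_of_hasDerivWithinAt_nonneg (convex_Ici a)
      (fun y _ => ((hg y).sub (hf y)).continuousAt.continuousWithinAt)
      (fun y _ => ((hg y).sub (hf y)).hasDerivWithinAt) fun y hy => ?_
    rw [interior_Ici] at hy
    exact sub_nonneg.2 (hderiv y hy)
  linarith [hmono self_mem_Ici hx hx]

lemma cos_le_taylor_four {x : ℝ} (hx : 0 ≤ x) : cos x ≤ 1 - x ^ 2 / 2 + x ^ 4 / 24 :=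
  le_of_hasDerivAt_le hasDerivAt_cos (g' := fun y => -y + y ^ 3 / 6)
    (fun y => by
      refine (((hasDerivAt_const y 1).sub ((hasDerivAt_pow 2 y).div_const 2)).add
        ((hasDerivAt_pow 4 y).div_const 24)).congr_deriv ?_
      norm_num; ring)
    (by simp) (fun y hy => by linarith [sin_ge_sub_cube hy.le]) hx

lemma sin_le_taylor_five {x : ℝ} (hx : 0 ≤ x) : sin x ≤ x - x ^ 3 / 6 + x ^ 5 / 120 :=
  le_of_hasDerivAt_le hasDerivAt_sin (g' := fun y => 1 - y ^ 2 / 2 + y ^ 4 / 24)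
    (fun y => by
      refine (((hasDerivAt_id y).sub ((hasDerivAt_pow 3 y).div_const 6)).add
        ((hasDerivAt_pow 5 y).div_const 120)).congr_deriv ?_
      norm_num; ring)
    (by simp) (fun y hy => cos_le_taylor_four hy.le) hx

lemma taylor_six_le_cos {x : ℝ} (hx : 0 ≤ x) :
    1 - x ^ 2 / 2 + x ^ 4 / 24 - x ^ 6 / 720 ≤ cos x :=
  le_of_hasDerivAt_le (f' := fun y => -y + y ^ 3 / 6 - y ^ 5 / 120)
    (fun y => by
      refine ((((hasDerivAt_const y 1).sub ((hasDerivAt_pow 2 y).div_const 2)).add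
        ((hasDerivAt_pow 4 y).div_const 24)).sub
          ((hasDerivAt_pow 6 y).div_const 720)).congr_deriv ?_
      norm_num; ring)
    hasDerivAt_cos (by simp) (fun y hy => by linarith [sin_le_taylor_five hy.le]) hx

lemma sq_sin_sub_mul_cos_le (t : ℝ) : (sin t - t * cos t) ^ 2 ≤ 1 + t ^ 2 := by
  nlinarith [sq_nonneg (t * sin t + cos t), sin_sq_add_cos_sq t]

lemma sin_sub_mul_cos_pos {t : ℝ} (ht : 0 < t) (ht2 : t ≤ 2) : 0 < sin t - t * cos t := by
  have hcos := mul_le_mul_of_nonneg_left (cos_le_taylor_four ht.le) ht.le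
  have : 0 < t ^ 3 * (8 - t ^ 2) := mul_pos (by positivity) (by nlinarith)
  nlinarith [sin_ge_sub_cube ht.le]

lemma two_mul_sq_sin_sub_mul_cos_le {t : ℝ} (ht : 0 ≤ t) :
    2 * (sin t - t * cos t) ^ 2 ≤ t ^ 2 * (t ^ 2 - sin t ^ 2) := by
  rcases le_or_gt t 2 with ht2 | ht2
  · rcases ht.eq_or_lt with rfl | ht0
    · simp
    have hu_le : sin t - t * cos t ≤ t ^ 3 / 3 - t ^ 5 / 30 + t ^ 7 / 720 := by
      nlinarith [sin_le_taylor_five ht, mul_le_mul_of_nonneg_left (taylor_six_le_cos ht) ht]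
    have hsin : sin t ^ 2 ≤ (t - t ^ 3 / 6 + t ^ 5 / 120) ^ 2 :=
      pow_le_pow_left₀ (sin_nonneg_of_nonneg_of_le_pi ht (by linarith [pi_gt_three]))
        (sin_le_taylor_five ht) 2
    have hpoly : 2 * (t ^ 3 / 3 - t ^ 5 / 30 + t ^ 7 / 720) ^ 2
        ≤ t ^ 2 * (t ^ 2 - (t - t ^ 3 / 6 + t ^ 5 / 120) ^ 2) := by
      have hs : t ^ 2 ≤ 4 := by nlinarith
      have hq : 0 ≤ 1 / 9 - 7 * (t ^ 2) ^ 2 / 5400 + (t ^ 2) ^ 3 / 8640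
          - (t ^ 2) ^ 4 / 259200 := by
        nlinarith [pow_le_pow_left₀ (sq_nonneg t) hs 2, pow_le_pow_left₀ (sq_nonneg t) hs 4,
          pow_nonneg (sq_nonneg t) 3]
      linear_combination t ^ 6 * hq
    have hu_sq := pow_le_pow_left₀ (sin_sub_mul_cos_pos ht0 ht2).le hu_le 2
    nlinarith
  · have hs : 4 ≤ t ^ 2 := by nlinarith
    have hpoly : 2 * (1 + t ^ 2) ≤ t ^ 2 * (t ^ 2 - 1) := by
      nlinarith [mul_nonneg (sub_nonneg.2 hs) (sq_nonneg t)]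
    nlinarith [sq_sin_sub_mul_cos_le t, sin_sq_le_one t, sq_nonneg t]

lemma sin_sub_mul_cos_pos_of_lt_first_root {j x : ℝ}
    (hfirst : ∀ x, 0 < x → x < j → sin x ≠ x * cos x) (hx : 0 < x) (hxj : x < j) :
    0 < sin x - x * cos x := by
  by_contra! hle
  set y := min x 1
  have hy : 0 < y := lt_min hx one_pos
  have hpos_y : 0 < sin y - y * cos y := sin_sub_mul_cos_pos hy (by simp [y])
  have hyx : y ≤ x := min_le_left x 1
  obtain ⟨z, hz, hz0⟩ := intermediate_value_Icc' hyx
    (by fun_prop : Continuous fun t => sin t - t * cos t).continuousOn ⟨hle, hpos_y.le⟩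
  exact hfirst z (hy.trans_le hz.1) (hz.2.trans_lt hxj) (sub_eq_zero.1 hz0)

/-- The spherical Bessel function `j₁ t = √(π / (2 t)) J_{3/2}(t)`. -/
noncomputable def sphericalBesselJ₁ (t : ℝ) : ℝ := (sin t - t * cos t) / t ^ 2

local notation "j₁" => sphericalBesselJ₁

lemma hasDerivAt_sin_div {x : ℝ} (hx : x ≠ 0) :
    HasDerivAt (fun t => sin t / t) (-j₁ x) x := by
  refine ((hasDerivAt_sin x).div (hasDerivAt_id x) hx).congr_deriv ?_
  simp only [sphericalBesselJ₁, id_eq]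
  field_simp
  ring

lemma continuousOn_sphericalBesselJ₁ : ContinuousOn j₁ {0}ᶜ :=
  ContinuousOn.div (by fun_prop) (by fun_prop) fun _ hx => pow_ne_zero 2 hx

lemma integral_sphericalBesselJ₁ {a b : ℝ} (ha : 0 < a) (hab : a ≤ b) :
    ∫ t in a..b, j₁ t = sin a / a - sin b / b := by
  have hne : ∀ x ∈ uIcc a b, x ≠ 0 := fun x hx => by
    rw [uIcc_of_le hab] at hx
    exact (ha.trans_le hx.1).ne'
  have hint : IntervalIntegrable j₁ MeasureTheory.volume a b :=
    (continuousOn_sphericalBesselJ₁.mono fun x hx => hne x hx).intervalIntegrable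
  rw [← neg_sub, ← intervalIntegral.integral_eq_sub_of_hasDerivAt
    (fun x hx => hasDerivAt_sin_div (hne x hx)) hint.neg, intervalIntegral.integral_neg,
    neg_neg]

lemma hasDerivAt_sin_sub_mul_cos (x : ℝ) :
    HasDerivAt (fun t => sin t - t * cos t) (x * sin x) x := by
  refine ((hasDerivAt_sin x).sub ((hasDerivAt_id x).mul (hasDerivAt_cos x))).congr_deriv ?_
  simp only [id_eq]
  ring

lemma concaveOn_log_sphericalBesselJ₁ {a b : ℝ} (ha : 0 < a)
    (hpos : ∀ t ∈ Icc a b, 0 < sin t - t * cos t) :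
    ConcaveOn ℝ (Icc a b) (fun t => log (j₁ t)) := by
  have hx0 : ∀ x ∈ Icc a b, x ≠ 0 := fun x hx => (ha.trans_le hx.1).ne'
  have hd1 : ∀ x ∈ Icc a b, HasDerivAt (fun t => log (sin t - t * cos t) - 2 * log t)
      (x * sin x / (sin x - x * cos x) - 2 / x) x := fun x hx => by
    refine (((hasDerivAt_sin_sub_mul_cos x).log (hpos x hx).ne').sub
      ((hasDerivAt_log (hx0 x hx)).const_mul 2)).congr_deriv ?_
    ring
  have hd2 : ∀ x ∈ Icc a b, HasDerivAt (fun t => t * sin t / (sin t - t * cos t) - 2 / t)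
      ((sin x ^ 2 - x ^ 2) / (sin x - x * cos x) ^ 2 + 2 / x ^ 2) x := fun x hx => by
    have hu := (hpos x hx).ne'
    refine ((((hasDerivAt_id x).mul (hasDerivAt_sin x)).div (hasDerivAt_sin_sub_mul_cos x)
      hu).sub ((hasDerivAt_inv (hx0 x hx)).const_mul 2)).congr_deriv ?_
    have hnum : (1 * sin x + x * cos x) * (sin x - x * cos x) - x * sin x * (x * sin x)
        = sin x ^ 2 - x ^ 2 := by
      linear_combination (-x ^ 2) * sin_sq_add_cos_sq x
    simp only [id_eq, Pi.mul_apply, hnum]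
    ring
  have hconc : ConcaveOn ℝ (Icc a b) (fun t => log (sin t - t * cos t) - 2 * log t) := by
    refine concaveOn_of_hasDerivWithinAt2_nonpos (convex_Icc a b)
      (f' := fun t => t * sin t / (sin t - t * cos t) - 2 / t)
      (f'' := fun t => (sin t ^ 2 - t ^ 2) / (sin t - t * cos t) ^ 2 + 2 / t ^ 2)
      (fun x hx => (hd1 x hx).continuousAt.continuousWithinAt)
      (fun x hx => ?_) (fun x hx => ?_) (fun x hx => ?_) <;> rw [interior_Icc] at hx
    · exact (hd1 x (Ioo_subset_Icc_self hx)).hasDerivWithinAt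
    · exact (hd2 x (Ioo_subset_Icc_self hx)).hasDerivWithinAt
    · have hu := hpos x (Ioo_subset_Icc_self hx)
      have hkey := two_mul_sq_sin_sub_mul_cos_le (ha.trans hx.1).le
      rw [div_add_div _ _ (pow_pos hu 2).ne' (pow_pos (ha.trans hx.1) 2).ne']
      exact div_nonpos_of_nonpos_of_nonneg (by linarith) (by positivity)
  refine hconc.congr fun t ht => ?_
  simp only [sphericalBesselJ₁]
  rw [log_div (hpos t ht).ne' (pow_ne_zero 2 (hx0 t ht)), log_pow, Nat.cast_ofNat]

lemma _root_.ConcaveOn.add_le_add_reflect {g : ℝ → ℝ} {a b t : ℝ}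
    (hg : ConcaveOn ℝ (Icc a b) g) (ht : t ∈ Icc a b) : g a + g b ≤ g t + g (a + b - t) := by
  have hab : a ≤ b := ht.1.trans ht.2
  rw [← segment_eq_Icc hab] at ht
  obtain ⟨p, q, hp, hq, hpq, rfl⟩ := ht
  have hreflect : a + b - (p • a + q • b) = q • a + p • b := by
    simp only [smul_eq_mul]
    linear_combination (-(a + b)) * hpq
  have ha := left_mem_Icc.2 hab
  have hb := right_mem_Icc.2 hab
  have h₁ := hg.2 ha hb hp hq hpq
  have h₂ := hg.2 ha hb hq hp (by linarith)
  simp only [smul_eq_mul] at h₁ h₂ hreflect ⊢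
  rw [hreflect]
  linear_combination h₁ + h₂ - (g a + g b) * hpq

lemma mul_sqrt_le_integral_of_concaveOn_log {f : ℝ → ℝ} {a b : ℝ} (hab : a ≤ b)
    (hf : ContinuousOn f (Icc a b)) (hpos : ∀ t ∈ Icc a b, 0 < f t)
    (hlog : ConcaveOn ℝ (Icc a b) fun t => log (f t)) :
    (b - a) * √(f a * f b) ≤ ∫ t in a..b, f t := by
  have hreflect : MapsTo (fun t => a + b - t) (Icc a b) (Icc a b) := fun t ht =>
    ⟨by linarith [ht.2], by linarith [ht.1]⟩
  have hprod : ∀ t ∈ Icc a b, f a * f b ≤ f t * f (a + b - t) := fun t ht => by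
    have ha := hpos a (left_mem_Icc.2 hab)
    have hb := hpos b (right_mem_Icc.2 hab)
    have hs := hpos _ (hreflect ht)
    rw [← log_le_log_iff (by positivity) (mul_pos (hpos t ht) hs), log_mul ha.ne' hb.ne',
      log_mul (hpos t ht).ne' hs.ne']
    exact hlog.add_le_add_reflect ht
  have hmean : ∀ t ∈ Icc a b, √(f a * f b) ≤ (f t + f (a + b - t)) / 2 := fun t ht =>
    sqrt_le_iff.2 ⟨by linarith [hpos t ht, hpos _ (hreflect ht)],
      by nlinarith [hprod t ht, sq_nonneg (f t - f (a + b - t))]⟩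
  have hint : IntervalIntegrable f MeasureTheory.volume a b :=
    (uIcc_of_le hab ▸ hf).intervalIntegrable
  have hint' : IntervalIntegrable (fun t => f (a + b - t)) MeasureTheory.volume a b :=
    (uIcc_of_le hab ▸ hf.comp (by fun_prop) hreflect).intervalIntegrable
  calc (b - a) * √(f a * f b) = ∫ _ in a..b, √(f a * f b) := by simp
    _ ≤ ∫ t in a..b, (f t + f (a + b - t)) / 2 :=
      intervalIntegral.integral_mono_on hab intervalIntegrable_const
        ((hint.add hint').div_const 2) hmean
    _ = ∫ t in a..b, f t := by
      rw [intervalIntegral.integral_div, intervalIntegral.integral_add hint hint',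
        intervalIntegral.integral_comp_sub_left f (a + b)]
      simp only [add_sub_cancel_right, add_sub_cancel_left]
      ring

lemma sub_mul_sqrt_le_mul_sin_sub {a b : ℝ} (ha : 0 < a) (hab : a ≤ b)
    (hpos : ∀ t ∈ Icc a b, 0 < sin t - t * cos t) :
    (b - a) * √((sin a - a * cos a) * (sin b - b * cos b)) ≤ b * sin a - a * sin b := by
  have hb : 0 < b := ha.trans_le hab
  have hcont : ContinuousOn j₁ (Icc a b) :=
    continuousOn_sphericalBesselJ₁.mono fun t ht => (ha.trans_le ht.1).ne'
  have hj₁ : ∀ t ∈ Icc a b, 0 < j₁ t := fun t ht =>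
    div_pos (hpos t ht) (pow_pos (ha.trans_le ht.1) 2)
  have hmean := mul_sqrt_le_integral_of_concaveOn_log hab hcont hj₁
    (concaveOn_log_sphericalBesselJ₁ ha hpos)
  rw [integral_sphericalBesselJ₁ ha hab] at hmean
  have hsqrt : √((sin a - a * cos a) * (sin b - b * cos b)) = a * b * √(j₁ a * j₁ b) := by
    rw [show (sin a - a * cos a) * (sin b - b * cos b) = (a * b) ^ 2 * (j₁ a * j₁ b) by
        simp only [sphericalBesselJ₁]; field_simp,
      sqrt_mul (sq_nonneg _), sqrt_sq (by positivity)]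
  calc (b - a) * √((sin a - a * cos a) * (sin b - b * cos b))
      = a * b * ((b - a) * √(j₁ a * j₁ b)) := by rw [hsqrt]; ring
    _ ≤ a * b * (sin a / a - sin b / b) := by gcongr
    _ = b * sin a - a * sin b := by field_simp

end VanDerCorput

theorem vanDerCorput_sin_half_general (j : ℝ) (hroot : Real.sin j = j * Real.cos j)
    (hfirst : ∀ x, 0 < x → x < j → Real.sin x ≠ x * Real.cos x)
    (a b : ℝ) (ha : a ∈ Set.Icc 0 j) (hb : b ∈ Set.Icc 0 j) :
    |b * Real.sin a - a * Real.sin b| ≥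
      |a - b| * Real.sqrt ((a * Real.cos a - Real.sin a) * (b * Real.cos b - Real.sin b)) := by
  wlog hab : a ≤ b generalizing a b
  · have := this b a hb ha (le_of_not_ge hab)
    rwa [abs_sub_comm b, abs_sub_comm (a * sin b), mul_comm (b * cos b - sin b)] at this
  rcases ha.1.eq_or_lt with rfl | ha0
  · simp
  rcases hb.2.eq_or_lt with rfl | hbj
  · simp [hroot]
  have hpos : ∀ t ∈ Icc a b, 0 < sin t - t * cos t := fun t ht =>
    VanDerCorput.sin_sub_mul_cos_pos_of_lt_first_root hfirst (ha0.trans_le ht.1) (ht.2.trans_lt hbj)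
  calc |a - b| * √((a * cos a - sin a) * (b * cos b - sin b))
      = (b - a) * √((sin a - a * cos a) * (sin b - b * cos b)) := by
        rw [abs_sub_comm, abs_of_nonneg (sub_nonneg.2 hab)]; ring_nf
    _ ≤ b * sin a - a * sin b := VanDerCorput.sub_mul_sqrt_le_mul_sin_sub ha0 hab hpos
    _ ≤ |b * sin a - a * sin b| := le_abs_self _

theorem vanDerCorput_sin_half (j : ℝ) (hj : 0 < j) (hroot : Real.sin j = j * Real.cos j)
    (hfirst : ∀ x, 0 < x → x < j → Real.sin x ≠ x * Real.cos x)
    (a b : ℝ) (ha : a ∈ Set.Icc 0 j) (hb : b ∈ Set.Icc 0 j) :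
    |b * Real.sin a - a * Real.sin b| ≥
      |a - b| * Real.sqrt ((a * Real.cos a - Real.sin a) * (b * Real.cos b - Real.sin b)) :=
  vanDerCorput_sin_half_general j hroot hfirst a b ha hb
end

section
/- For all real numbers a, b ≥ 0, |(a+1)·e^{−a} − (b+1)·e^{−b}| ≥ |a − b| · √(a·b) · e^{−(a+b)/2}. -/
/-!
Put `m = (a + b) / 2` and `t = (a - b) / 2 ≥ 0`. After factoring out `2 e^{-m}` the claim becomes
`t √(m² - t²) ≤ (m + 1) sinh t - t cosh t`. With `d = √(sinh² t - t²)`, the reverse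
Cauchy–Schwarz inequality on the hyperbola `x² - y² = t²` gives
`t √(m² - t²) + t d ≤ m sinh t`, and `t cosh t - sinh t ≤ t d` is, after squaring, the
inequality `cosh u + u²/2 + u⁴/8 ≤ 1 + u sinh u` (compare Taylor coefficients) at `u = 2t`.
-/

open Real Set

theorem one_add_sq_div_two_le_cosh (x : ℝ) : 1 + x ^ 2 / 2 ≤ cosh x := by
  have hcosh : cosh x = 1 + 2 * sinh (x / 2) ^ 2 := by
    rw [← mul_div_cancel₀ x two_ne_zero, cosh_two_mul, cosh_sq]
    ring_nf
  have : |x / 2| ≤ |sinh (x / 2)| := by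
    rw [abs_sinh]; exact self_le_sinh_iff.2 (abs_nonneg _)
  nlinarith [sq_le_sq.2 this]

theorem cosh_add_sq_add_pow_four_le_mul_sinh {u : ℝ} (hu : 0 ≤ u) :
    cosh u + u ^ 2 / 2 + u ^ 4 / 8 ≤ 1 + u * sinh u := by
  let g : ℝ → ℝ := fun x ↦ x * sinh x - cosh x - x ^ 2 / 2 - x ^ 4 / 8
  have hg : ∀ x, HasDerivAt g (x * (cosh x - (1 + x ^ 2 / 2))) x := by
    intro x
    refine (((((hasDerivAt_id' x).mul (hasDerivAt_sinh x)).sub (hasDerivAt_cosh x)).sub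
      ((hasDerivAt_pow 2 x).div_const 2)).sub ((hasDerivAt_pow 4 x).div_const 8)).congr_deriv ?_
    ring
  have hmono : MonotoneOn g (Ici 0) :=
    monotoneOn_of_hasDerivWithinAt_nonneg (convex_Ici 0)
      (fun x _ ↦ (hg x).continuousAt.continuousWithinAt)
      (fun x _ ↦ (hg x).hasDerivWithinAt)
      (fun x hx ↦ mul_nonneg (interior_subset hx) (sub_nonneg.2 (one_add_sq_div_two_le_cosh x)))
  have := hmono self_mem_Ici hu hu
  simp only [g, sinh_zero, cosh_zero] at this
  linarith

theorem mul_cosh_sub_sinh_le {t : ℝ} (ht : 0 ≤ t) :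
    t * cosh t - sinh t ≤ t * √(sinh t ^ 2 - t ^ 2) := by
  have hts : t ≤ sinh t := self_le_sinh_iff.2 ht
  have hdouble := cosh_add_sq_add_pow_four_le_mul_sinh (mul_nonneg zero_le_two ht)
  rw [cosh_two_mul, sinh_two_mul] at hdouble
  refine le_of_sq_le_sq ?_ (by positivity)
  rw [mul_pow, sq_sqrt (by nlinarith)]
  nlinarith [cosh_sq t]

theorem mul_sqrt_sq_sub_sq_add_mul_sqrt_sq_sub_sq_le {t m s : ℝ} (ht : 0 ≤ t) (hm : t ≤ m)
    (hs : t ≤ s) : t * √(m ^ 2 - t ^ 2) + t * √(s ^ 2 - t ^ 2) ≤ m * s := by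
  set r := √(m ^ 2 - t ^ 2)
  set d := √(s ^ 2 - t ^ 2)
  have hr : m ^ 2 = t ^ 2 + r ^ 2 := by rw [sq_sqrt (by nlinarith)]; ring
  have hd : s ^ 2 = t ^ 2 + d ^ 2 := by rw [sq_sqrt (by nlinarith)]; ring
  have hlagrange : (m * s) ^ 2 - (t * r + t * d) ^ 2 = (t ^ 2 - r * d) ^ 2 := by
    rw [mul_pow, hr, hd]; ring
  exact le_of_sq_le_sq (by nlinarith [sq_nonneg (t ^ 2 - r * d)]) (by nlinarith)

theorem mul_sqrt_sq_sub_sq_le {t m : ℝ} (ht : 0 ≤ t) (hm : t ≤ m) :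
    t * √(m ^ 2 - t ^ 2) ≤ (m + 1) * sinh t - t * cosh t := by
  have := mul_sqrt_sq_sub_sq_add_mul_sqrt_sq_sub_sq_le ht hm (self_le_sinh_iff.2 ht)
  linarith [mul_cosh_sub_sinh_le ht]

theorem add_one_mul_exp_neg_sub_add_one_mul_exp_neg (m t : ℝ) :
    (m - t + 1) * exp (-(m - t)) - (m + t + 1) * exp (-(m + t)) =
      2 * exp (-m) * ((m + 1) * sinh t - t * cosh t) := by
  rw [sinh_eq, cosh_eq, show -(m - t) = -m + t by ring, show -(m + t) = -m + -t by ring,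
    exp_add, exp_add]
  ring

theorem vanDerCorput_K (a b : ℝ) (ha : 0 ≤ a) (hb : 0 ≤ b) :
    |(a + 1) * Real.exp (-a) - (b + 1) * Real.exp (-b)| ≥
      |a - b| * Real.sqrt (a * b) * Real.exp (-(a + b) / 2) := by
  wlog hab : b ≤ a with H
  · simpa only [abs_sub_comm, mul_comm, add_comm] using H b a hb ha (le_of_not_ge hab)
  obtain ⟨m, t, rfl, rfl⟩ : ∃ m t, a = m + t ∧ b = m - t :=
    ⟨(a + b) / 2, (a - b) / 2, by ring, by ring⟩
  have ht : 0 ≤ t := by linarith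
  rw [abs_sub_comm, add_one_mul_exp_neg_sub_add_one_mul_exp_neg,
    show m + t - (m - t) = 2 * t by ring, show (m + t) * (m - t) = m ^ 2 - t ^ 2 by ring,
    show -(m + t + (m - t)) / 2 = -m by ring, abs_of_nonneg (by linarith : 0 ≤ 2 * t)]
  calc 2 * t * √(m ^ 2 - t ^ 2) * exp (-m)
      ≤ 2 * exp (-m) * ((m + 1) * sinh t - t * cosh t) := by
        nlinarith [mul_sqrt_sq_sub_sq_le ht (by linarith : t ≤ m), exp_pos (-m)]
    _ ≤ _ := le_abs_self _
end

section
/- For α ≥ 1 and all a, b ≥ 0, |γ(α, a) − γ(α, b)| ≥ |a − b| · (a·b)^{(α−1)/2} · e^{−(a+b)/2}, where γ(α, x) = ∫₀ˣ t^{α−1} e^{−t} dt is the lower incomplete gamma function. -/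
open Real intervalIntegral MeasureTheory

private lemma gammaf_cont (α : ℝ) (hα : 1 ≤ α) :
    Continuous (fun t : ℝ => t ^ (α - 1) * Real.exp (-t)) := by
  apply Continuous.mul _ (Real.continuous_exp.comp continuous_neg)
  rw [continuous_iff_continuousAt]
  intro x
  exact Real.continuousAt_rpow_const x (α - 1) (Or.inr (by linarith))

private lemma key (α : ℝ) (hα : 1 ≤ α) (a b : ℝ) (ha : 0 ≤ a) (hab : a ≤ b) :
    (b - a) * ((a * b) ^ ((α - 1) / 2) * Real.exp (-(a + b) / 2)) ≤
      ∫ t in a..b, t ^ (α - 1) * Real.exp (-t) := by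
  set f : ℝ → ℝ := fun t => t ^ (α - 1) * Real.exp (-t) with hf
  have hfc : Continuous f := gammaf_cont α hα
  have hab0 : 0 ≤ a * b := mul_nonneg ha (ha.trans hab)
  set c : ℝ := (a * b) ^ ((α - 1) / 2) * Real.exp (-(a + b) / 2) with hc
  have hc0 : 0 ≤ c := mul_nonneg (Real.rpow_nonneg hab0 _) (Real.exp_pos _).le
  have hpt : ∀ t ∈ Set.Icc a b, 2 * c ≤ f t + f (a + b - t) := by
    intro t ht
    obtain ⟨hat, htb⟩ := ht
    have ht0 : 0 ≤ t := ha.trans hat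
    have hs0 : 0 ≤ a + b - t := by linarith
    have hprod : a * b ≤ t * (a + b - t) := by nlinarith
    have hft0 : 0 ≤ f t := mul_nonneg (Real.rpow_nonneg ht0 _) (Real.exp_pos _).le
    have hfs0 : 0 ≤ f (a + b - t) := mul_nonneg (Real.rpow_nonneg hs0 _) (Real.exp_pos _).le
    have hsq : c ^ 2 ≤ f t * f (a + b - t) := by
      have h1 : c ^ 2 = (a * b) ^ (α - 1) * Real.exp (-(a + b)) := by
        rw [hc, mul_pow, ← Real.rpow_natCast ((a * b) ^ ((α - 1) / 2)) 2,
          ← Real.rpow_mul hab0, ← Real.exp_nat_mul]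
        have e1 : (α - 1) / 2 * ((2 : ℕ) : ℝ) = α - 1 := by push_cast; ring
        have e2 : ((2 : ℕ) : ℝ) * (-(a + b) / 2) = -(a + b) := by push_cast; ring
        rw [e1, e2]
      have h2 : f t * f (a + b - t) = (t * (a + b - t)) ^ (α - 1) * Real.exp (-(a + b)) := by
        rw [hf]
        simp only
        rw [Real.mul_rpow ht0 hs0, show (-(a + b)) = -t + -(a + b - t) by ring,
          Real.exp_add]
        ring
      rw [h1, h2]
      exact mul_le_mul_of_nonneg_right
        (Real.rpow_le_rpow hab0 hprod (by linarith)) (Real.exp_pos _).le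
    have hcs : c ≤ Real.sqrt (f t * f (a + b - t)) := by
      calc c = Real.sqrt (c ^ 2) := (Real.sqrt_sq hc0).symm
        _ ≤ _ := Real.sqrt_le_sqrt hsq
    have hamgm : 2 * Real.sqrt (f t * f (a + b - t)) ≤ f t + f (a + b - t) := by
      rw [Real.sqrt_mul hft0]
      nlinarith [two_mul_le_add_sq (Real.sqrt (f t)) (Real.sqrt (f (a + b - t))),
        Real.sq_sqrt hft0, Real.sq_sqrt hfs0]
    nlinarith
  have hint1 : IntervalIntegrable f MeasureTheory.volume a b := hfc.intervalIntegrable a b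
  have hint2 : IntervalIntegrable (fun t => f (a + b - t)) MeasureTheory.volume a b :=
    (hfc.comp (by continuity)).intervalIntegrable a b
  have hrefl : (∫ t in a..b, f (a + b - t)) = ∫ t in a..b, f t := by
    simpa using intervalIntegral.integral_comp_sub_left (a := a) (b := b) f (a + b)
  have hmono : (∫ _t in a..b, 2 * c) ≤ ∫ t in a..b, (f t + f (a + b - t)) := by
    apply intervalIntegral.integral_mono_on hab (intervalIntegrable_const) (hint1.add hint2)
    exact hpt
  rw [intervalIntegral.integral_const, intervalIntegral.integral_add hint1 hint2, hrefl,
    smul_eq_mul] at hmono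
  linarith

theorem vanDerCorput_incompleteGamma (α : ℝ) (hα : 1 ≤ α) (a b : ℝ) (ha : 0 ≤ a) (hb : 0 ≤ b) :
    |(∫ t in (0 : ℝ)..a, t ^ (α - 1) * Real.exp (-t)) -
        ∫ t in (0 : ℝ)..b, t ^ (α - 1) * Real.exp (-t)| ≥
      |a - b| * (a * b) ^ ((α - 1) / 2) * Real.exp (-(a + b) / 2) := by
  have hfc := gammaf_cont α hα
  rcases le_total a b with hab | hab
  · have hsub : (∫ t in (0:ℝ)..b, t ^ (α - 1) * Real.exp (-t)) -
        (∫ t in (0:ℝ)..a, t ^ (α - 1) * Real.exp (-t)) =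
        ∫ t in a..b, t ^ (α - 1) * Real.exp (-t) :=
      intervalIntegral.integral_interval_sub_left (hfc.intervalIntegrable 0 b)
        (hfc.intervalIntegrable 0 a)
    have hkey := key α hα a b ha hab
    rw [ge_iff_le, show |a - b| = b - a by rw [abs_sub_comm]; exact abs_of_nonneg (by linarith),
      abs_sub_comm, hsub, mul_assoc]
    exact hkey.trans (le_abs_self _)
  · have hsub : (∫ t in (0:ℝ)..a, t ^ (α - 1) * Real.exp (-t)) -
        (∫ t in (0:ℝ)..b, t ^ (α - 1) * Real.exp (-t)) =
        ∫ t in b..a, t ^ (α - 1) * Real.exp (-t) :=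
      intervalIntegral.integral_interval_sub_left (hfc.intervalIntegrable 0 a)
        (hfc.intervalIntegrable 0 b)
    have hkey := key α hα b a hb hab
    rw [mul_comm b a, add_comm b a] at hkey
    rw [ge_iff_le, hsub, mul_assoc, abs_of_nonneg (by linarith : (0:ℝ) ≤ a - b)]
    exact hkey.trans (le_abs_self _)
end

section
/- For 0 < a, b < √7, the inequality 3·|ℐ_{1/2}(a) − ℐ_{1/2}(b)| ≥ |a − b|·√(a·b·ℐ_{3/2}(a)·ℐ_{3/2}(b)) holds, where ℐ_{1/2}(x) = sinh x / x and ℐ_{3/2}(x) = 3(cosh x/x² − sinh x/x³). -/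
open Real Set

noncomputable def J0 : ℝ → ℝ := fun x => Real.sinh x / x
noncomputable def J1 : ℝ → ℝ := fun x => (x * Real.cosh x - Real.sinh x) / x ^ 2
noncomputable def J2 : ℝ → ℝ := fun x => ((x ^ 2 + 2) * Real.sinh x - 2 * x * Real.cosh x) / x ^ 3
noncomputable def J3 : ℝ → ℝ :=
  fun x => ((x ^ 3 + 6 * x) * Real.cosh x - (3 * x ^ 2 + 6) * Real.sinh x) / x ^ 4

lemma hd_J0 {x : ℝ} (hx : x ≠ 0) : HasDerivAt J0 (J1 x) x := by
  have h := (Real.hasDerivAt_sinh x).div (hasDerivAt_id x) hx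
  refine h.congr_deriv ?_
  unfold J1
  simp only [id_eq]
  field_simp

lemma hd_J1 {x : ℝ} (hx : x ≠ 0) : HasDerivAt J1 (J2 x) x := by
  have hnum : HasDerivAt (fun y : ℝ => y * Real.cosh y - Real.sinh y)
      (1 * Real.cosh x + x * Real.sinh x - Real.cosh x) x :=
    ((hasDerivAt_id x).mul (Real.hasDerivAt_cosh x)).sub (Real.hasDerivAt_sinh x)
  have h := hnum.div (hasDerivAt_pow 2 x) (pow_ne_zero 2 hx)
  refine h.congr_deriv ?_
  unfold J2
  field_simp
  ring

lemma hd_J2 {x : ℝ} (hx : x ≠ 0) : HasDerivAt J2 (J3 x) x := by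
  have hnum : HasDerivAt (fun y : ℝ => (y ^ 2 + 2) * Real.sinh y - 2 * y * Real.cosh y)
      (((2:ℕ) * x ^ 1) * Real.sinh x + (x ^ 2 + 2) * Real.cosh x -
        (2 * Real.cosh x + 2 * x * Real.sinh x)) x := by
    have h1 : HasDerivAt (fun y : ℝ => (y ^ 2 + 2) * Real.sinh y)
        (((2:ℕ) * x ^ 1) * Real.sinh x + (x ^ 2 + 2) * Real.cosh x) x :=
      ((hasDerivAt_pow 2 x).add_const 2).mul (Real.hasDerivAt_sinh x)
    have h2 : HasDerivAt (fun y : ℝ => 2 * y * Real.cosh y)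
        (2 * Real.cosh x + 2 * x * Real.sinh x) x := by
      have := (((hasDerivAt_id x).const_mul 2).mul (Real.hasDerivAt_cosh x))
      refine this.congr_deriv ?_
      simp only [id_eq]
      ring
    exact h1.sub h2
  have h := hnum.div (hasDerivAt_pow 3 x) (pow_ne_zero 3 hx)
  refine h.congr_deriv ?_
  unfold J3
  field_simp
  ring

lemma aux_pos {F F' : ℝ → ℝ} (hd : ∀ y, HasDerivAt F (F' y) y) (h0 : F 0 = 0)
    (hp : ∀ y, 0 < y → 0 < F' y) {x : ℝ} (hx : 0 < x) : 0 < F x := by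
  have hmono : StrictMonoOn F (Set.Ici 0) := by
    apply strictMonoOn_of_deriv_pos (convex_Ici 0)
      (fun y _ => (hd y).continuousAt.continuousWithinAt)
    intro y hy
    rw [interior_Ici] at hy
    rw [(hd y).deriv]
    exact hp y hy
  have := hmono Set.self_mem_Ici (Set.mem_Ici.mpr hx.le) hx
  rwa [h0] at this

lemma N1_pos {x : ℝ} (hx : 0 < x) : 0 < x * Real.cosh x - Real.sinh x := by
  apply aux_pos (F' := fun y => y * Real.sinh y) _ (by simp) _ hx
  · intro y
    have h := ((hasDerivAt_id y).mul (Real.hasDerivAt_cosh y)).sub (Real.hasDerivAt_sinh y)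
    refine h.congr_deriv ?_
    simp only [id_eq]
    ring
  · intro y hy
    exact mul_pos hy (Real.sinh_pos_iff.mpr hy)

lemma N3_pos {x : ℝ} (hx : 0 < x) :
    0 < (x ^ 3 + 6 * x) * Real.cosh x - (3 * x ^ 2 + 6) * Real.sinh x := by
  apply aux_pos (F' := fun y => y ^ 3 * Real.sinh y) _ (by simp) _ hx
  · intro y
    have h1 : HasDerivAt (fun y : ℝ => (y ^ 3 + 6 * y) * Real.cosh y)
        (((3:ℕ) * y ^ 2 + 6) * Real.cosh y + (y ^ 3 + 6 * y) * Real.sinh y) y :=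
      (((hasDerivAt_pow 3 y).add ((hasDerivAt_id y).const_mul 6)).mul (Real.hasDerivAt_cosh y)).congr_deriv (by simp only [id_eq, Pi.add_apply]; push_cast; ring)
    have h2 : HasDerivAt (fun y : ℝ => (3 * y ^ 2 + 6) * Real.sinh y)
        (6 * y * Real.sinh y + (3 * y ^ 2 + 6) * Real.cosh y) y := by
      have := (((hasDerivAt_pow 2 y).const_mul 3).add_const 6).mul (Real.hasDerivAt_sinh y)
      exact this.congr_deriv (by push_cast; ring)
    have h := h1.sub h2
    exact h.congr_deriv (by ring)
  · intro y hy
    exact mul_pos (pow_pos hy 3) (Real.sinh_pos_iff.mpr hy)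

lemma J1_pos {x : ℝ} (hx : 0 < x) : 0 < J1 x := by
  unfold J1
  exact div_pos (N1_pos hx) (by positivity)

set_option maxHeartbeats 3000000 in
lemma expQuad {y : ℝ} (hy : 0 ≤ y) (hy2 : y ^ 2 ≤ 28) :
    0 ≤ (6 - y) * Real.exp y ^ 2 - (12 + 4 * y ^ 2) * Real.exp y + (6 + y) := by
  have hp : ∀ n : ℕ, 0 ≤ y ^ n := fun n => pow_nonneg hy n
  have h28 : (0:ℝ) ≤ 28 - y ^ 2 := by linarith
  have hb : ∀ n : ℕ, 0 ≤ (28 - y ^ 2) * y ^ n := fun n => mul_nonneg h28 (hp n)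
  set t := Real.exp y with ht
  have hL : 1 + y + y^2/2 + y^3/6 + y^4/24 + y^5/120 + y^6/720 + y^7/5040 + y^8/40320 + y^9/362880 + y^10/3628800 + y^11/39916800 + y^12/479001600 ≤ t := by
    have h := Real.sum_le_exp_of_nonneg hy 13
    have e : ∑ i ∈ Finset.range 13, y ^ i / (Nat.factorial i : ℝ) = 1 + y + y^2/2 + y^3/6 + y^4/24 + y^5/120 + y^6/720 + y^7/5040 + y^8/40320 + y^9/362880 + y^10/3628800 + y^11/39916800 + y^12/479001600 := by
      simp [Finset.sum_range_succ, Nat.factorial]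
    rw [e] at h
    exact h
  have hg : 12 + 4 * y ^ 2 ≤ (6 - y) * (2 * (1 + y + y^2/2 + y^3/6 + y^4/24 + y^5/120 + y^6/720 + y^7/5040 + y^8/40320 + y^9/362880 + y^10/3628800 + y^11/39916800 + y^12/479001600)) := by
    linarith [(hb 3), (hb 4), (hb 5), (hb 6), (hb 7), (hb 8), (hb 9), (hb 10), (hb 11), (hp 1), (hp 2), (hp 3), (hp 4), (hp 5), (hp 6), (hp 7), (hp 8)]
  have hQL : 0 ≤ (6 - y) * (1 + y + y^2/2 + y^3/6 + y^4/24 + y^5/120 + y^6/720 + y^7/5040 + y^8/40320 + y^9/362880 + y^10/3628800 + y^11/39916800 + y^12/479001600) ^ 2 - (12 + 4 * y ^ 2) * (1 + y + y^2/2 + y^3/6 + y^4/24 + y^5/120 + y^6/720 + y^7/5040 + y^8/40320 + y^9/362880 + y^10/3628800 + y^11/39916800 + y^12/479001600) + (6 + y) := by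
    linarith [(hb 6), (hb 7), (hb 8), (hb 9), (hb 10), (hb 11), (hb 12), (hb 13), (hb 14), (hb 15), (hb 16), (hb 17), (hb 18), (hb 19), (hb 20), (hb 21), (hb 22), (hb 23), (hp 1), (hp 2), (hp 3), (hp 4), (hp 5), (hp 6), (hp 7), (hp 8)]
  have h6 : 0 ≤ 6 - y := by nlinarith
  have hst : 0 ≤ t - (1 + y + y^2/2 + y^3/6 + y^4/24 + y^5/120 + y^6/720 + y^7/5040 + y^8/40320 + y^9/362880 + y^10/3628800 + y^11/39916800 + y^12/479001600) := by linarith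
  have h2 : 12 + 4 * y ^ 2 ≤ (6 - y) * (t + (1 + y + y^2/2 + y^3/6 + y^4/24 + y^5/120 + y^6/720 + y^7/5040 + y^8/40320 + y^9/362880 + y^10/3628800 + y^11/39916800 + y^12/479001600)) := by
    nlinarith [mul_nonneg h6 hst]
  have h3 : 0 ≤ (t - (1 + y + y^2/2 + y^3/6 + y^4/24 + y^5/120 + y^6/720 + y^7/5040 + y^8/40320 + y^9/362880 + y^10/3628800 + y^11/39916800 + y^12/479001600)) * ((6 - y) * (t + (1 + y + y^2/2 + y^3/6 + y^4/24 + y^5/120 + y^6/720 + y^7/5040 + y^8/40320 + y^9/362880 + y^10/3628800 + y^11/39916800 + y^12/479001600)) - (12 + 4 * y ^ 2)) :=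
    mul_nonneg hst (by linarith)
  nlinarith [hQL, h3]

lemma K1_nonneg {x : ℝ} (hx : 0 < x) (hx2 : x ^ 2 ≤ 7) :
    0 ≤ 3 * Real.sinh x ^ 2 - x * Real.sinh x * Real.cosh x - 2 * x ^ 2 := by
  have hy : (0:ℝ) ≤ 2 * x := by linarith
  have hy2 : (2 * x) ^ 2 ≤ 28 := by nlinarith
  have h := expQuad hy hy2
  have hE : Real.exp (2 * x) = Real.exp x ^ 2 := by
    rw [two_mul, Real.exp_add, sq]
  rw [hE] at h
  have hexp : Real.exp x ≠ 0 := (Real.exp_pos x).ne'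
  have key : (6 - 2 * x) * (Real.exp x ^ 2) ^ 2 - (12 + 4 * (2 * x) ^ 2) * Real.exp x ^ 2 +
      (6 + 2 * x) = 8 * Real.exp x ^ 2 *
      (3 * Real.sinh x ^ 2 - x * Real.sinh x * Real.cosh x - 2 * x ^ 2) := by
    rw [Real.sinh_eq, Real.cosh_eq, Real.exp_neg]
    field_simp
    ring
  rw [key] at h
  have h8 : (0:ℝ) < 8 * Real.exp x ^ 2 := by positivity
  nlinarith [h, h8]

noncomputable def K0 : ℝ → ℝ :=
  fun x => 4 * x * Real.sinh x * Real.cosh x - (x ^ 2 + 2) * (Real.sinh x ^ 2 + x ^ 2)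

lemma hd_K0 (x : ℝ) : HasDerivAt K0
    (2 * x * (3 * Real.sinh x ^ 2 - x * Real.sinh x * Real.cosh x - 2 * x ^ 2)) x := by
  have t1 : HasDerivAt (fun y : ℝ => 4 * y * Real.sinh y * Real.cosh y)
      ((4 * Real.sinh x + 4 * x * Real.cosh x) * Real.cosh x +
        (4 * x * Real.sinh x) * Real.sinh x) x := by
    have ha : HasDerivAt (fun y : ℝ => 4 * y * Real.sinh y)
        (4 * Real.sinh x + 4 * x * Real.cosh x) x := by
      have := ((hasDerivAt_id x).const_mul 4).mul (Real.hasDerivAt_sinh x)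
      exact this.congr_deriv (by simp only [id_eq]; ring)
    exact ha.mul (Real.hasDerivAt_cosh x)
  have t2 : HasDerivAt (fun y : ℝ => (y ^ 2 + 2) * (Real.sinh y ^ 2 + y ^ 2))
      ((2 * x) * (Real.sinh x ^ 2 + x ^ 2) +
        (x ^ 2 + 2) * (2 * Real.sinh x * Real.cosh x + 2 * x)) x := by
    have ha : HasDerivAt (fun y : ℝ => y ^ 2 + 2) (2 * x) x := by
      have := (hasDerivAt_pow 2 x).add_const 2
      exact this.congr_deriv (by push_cast; ring)
    have hb : HasDerivAt (fun y : ℝ => Real.sinh y ^ 2 + y ^ 2)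
        (2 * Real.sinh x * Real.cosh x + 2 * x) x := by
      have hs : HasDerivAt (fun y : ℝ => Real.sinh y ^ 2)
          (2 * Real.sinh x * Real.cosh x) x := by
        have := (Real.hasDerivAt_sinh x).pow 2
        exact this.congr_deriv (by push_cast; ring)
      have hq : HasDerivAt (fun y : ℝ => y ^ 2) (2 * x) x := by
        have := hasDerivAt_pow 2 x
        exact this.congr_deriv (by push_cast; ring)
      exact hs.add hq
    exact ha.mul hb
  have h := t1.sub t2
  apply h.congr_deriv
  have hc := Real.cosh_sq x
  linear_combination (4 * x) * hc

lemma K0_zero : K0 0 = 0 := by simp [K0]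

lemma K0_nonneg {x : ℝ} (hx : 0 ≤ x) (hx7 : x ≤ Real.sqrt 7) : 0 ≤ K0 x := by
  have hmono : MonotoneOn K0 (Set.Icc 0 (Real.sqrt 7)) := by
    apply monotoneOn_of_deriv_nonneg (convex_Icc _ _)
      (fun y _ => (hd_K0 y).continuousAt.continuousWithinAt)
      (fun y hy => (hd_K0 y).differentiableAt.differentiableWithinAt)
    intro y hy
    rw [interior_Icc, Set.mem_Ioo] at hy
    rw [(hd_K0 y).deriv]
    have hy2 : y ^ 2 ≤ 7 := by
      have := (Real.lt_sqrt hy.1.le).mp hy.2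
      linarith
    exact mul_nonneg (by linarith [hy.1]) (K1_nonneg hy.1 hy2)
  have h7 : (0:ℝ) ≤ Real.sqrt 7 := Real.sqrt_nonneg 7
  have := hmono (Set.mem_Icc.mpr ⟨le_refl 0, h7⟩) (Set.mem_Icc.mpr ⟨hx, hx7⟩) hx
  rwa [K0_zero] at this

lemma key_ineq {x : ℝ} (hx : 0 < x) (hx7 : x ≤ Real.sqrt 7) : J1 x * J3 x ≤ J2 x ^ 2 := by
  have h6 : (0:ℝ) < x ^ 6 := by positivity
  have hK : 0 ≤ K0 x := K0_nonneg hx.le hx7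
  have hc := Real.cosh_sq x
  have e : ((x ^ 2 + 2) * Real.sinh x - 2 * x * Real.cosh x) ^ 2 -
      (x * Real.cosh x - Real.sinh x) *
        ((x ^ 3 + 6 * x) * Real.cosh x - (3 * x ^ 2 + 6) * Real.sinh x) = K0 x := by
    unfold K0
    linear_combination (-(x ^ 4 + 2 * x ^ 2)) * hc
  have e2 : J2 x ^ 2 - J1 x * J3 x = K0 x / x ^ 6 := by
    unfold J1 J2 J3
    rw [← e]
    field_simp
  have hpos : 0 ≤ K0 x / x ^ 6 := div_nonneg hK h6.le
  linarith [e2, hpos]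

lemma r_anti : AntitoneOn (fun x => J2 x / J1 x) (Set.Ioo 0 (Real.sqrt 7)) := by
  have hder : ∀ x ∈ Set.Ioo (0:ℝ) (Real.sqrt 7), HasDerivAt (fun x => J2 x / J1 x)
      ((J3 x * J1 x - J2 x * J2 x) / J1 x ^ 2) x := by
    intro x hx
    rw [Set.mem_Ioo] at hx
    exact (hd_J2 hx.1.ne').div (hd_J1 hx.1.ne') (J1_pos hx.1).ne'
  apply antitoneOn_of_deriv_nonpos (convex_Ioo _ _)
    (fun x hx => (hder x hx).continuousAt.continuousWithinAt)
  · intro x hx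
    rw [interior_Ioo] at hx
    exact (hder x hx).differentiableAt.differentiableWithinAt
  · intro x hx
    rw [interior_Ioo] at hx
    rw [(hder x hx).deriv]
    apply div_nonpos_of_nonpos_of_nonneg _ (sq_nonneg _)
    have h := key_ineq hx.1 hx.2.le
    nlinarith [h]

lemma J2_mono : MonotoneOn J2 (Set.Ioi 0) := by
  apply monotoneOn_of_deriv_nonneg (convex_Ioi _)
  · intro x hx
    exact (hd_J2 (ne_of_gt hx)).continuousAt.continuousWithinAt
  · intro x hx
    rw [interior_Ioi] at hx
    exact (hd_J2 (ne_of_gt hx)).differentiableAt.differentiableWithinAt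
  · intro x hx
    rw [interior_Ioi] at hx
    rw [(hd_J2 (ne_of_gt hx)).deriv]
    unfold J3
    exact div_nonneg (N3_pos hx).le (by positivity)

lemma tangent {m x : ℝ} (hm : 0 < m) (hx : 0 < x) : J1 m + J2 m * (x - m) ≤ J1 x := by
  rcases lt_trichotomy x m with h | h | h
  · obtain ⟨c, hc, hc2⟩ := exists_hasDerivAt_eq_slope J1 J2 h
      (fun y hy => by
        rw [Set.mem_Icc] at hy
        exact (hd_J1 (by linarith : y ≠ 0)).continuousAt.continuousWithinAt)
      (fun y hy => by
        rw [Set.mem_Ioo] at hy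
        exact hd_J1 (by linarith : y ≠ 0))
    rw [Set.mem_Ioo] at hc
    have hcm : J2 c ≤ J2 m := J2_mono (Set.mem_Ioi.mpr (by linarith)) (Set.mem_Ioi.mpr hm)
      (by linarith)
    have hmx : 0 < m - x := by linarith
    rw [eq_div_iff (by linarith : m - x ≠ 0)] at hc2
    nlinarith [hc2, hcm, hmx]
  · simp [h]
  · obtain ⟨c, hc, hc2⟩ := exists_hasDerivAt_eq_slope J1 J2 h
      (fun y hy => by
        rw [Set.mem_Icc] at hy
        exact (hd_J1 (by linarith : y ≠ 0)).continuousAt.continuousWithinAt)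
      (fun y hy => by
        rw [Set.mem_Ioo] at hy
        exact hd_J1 (by linarith : y ≠ 0))
    rw [Set.mem_Ioo] at hc
    have hcm : J2 m ≤ J2 c := J2_mono (Set.mem_Ioi.mpr hm) (Set.mem_Ioi.mpr (by linarith))
      (by linarith)
    have hmx : 0 < x - m := by linarith
    rw [eq_div_iff (by linarith : x - m ≠ 0)] at hc2
    nlinarith [hc2, hcm, hmx]

lemma midpoint_ineq {a b : ℝ} (hb : 0 < b) (hba : b < a) :
    J1 ((a + b) / 2) * (a - b) ≤ J0 a - J0 b := by
  set m : ℝ := (a + b) / 2 with hm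
  have hm0 : 0 < m := by rw [hm]; linarith
  set H : ℝ → ℝ := fun x => J0 x - J1 m * x - J2 m / 2 * (x - m) ^ 2 with hH
  have hdH : ∀ x : ℝ, 0 < x → HasDerivAt H (J1 x - J1 m - J2 m * (x - m)) x := by
    intro x hx
    have h1 : HasDerivAt (fun y : ℝ => J1 m * y) (J1 m) x := by
      simpa using (hasDerivAt_id x).const_mul (J1 m)
    have h2 : HasDerivAt (fun y : ℝ => J2 m / 2 * (y - m) ^ 2) (J2 m * (x - m)) x := by
      have hq : HasDerivAt (fun y : ℝ => (y - m) ^ 2) (2 * (x - m)) x := by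
        have := ((hasDerivAt_id x).sub_const m).pow 2
        exact this.congr_deriv (by simp only [id_eq]; push_cast; ring)
      have := hq.const_mul (J2 m / 2)
      exact this.congr_deriv (by ring)
    exact ((hd_J0 hx.ne').sub h1).sub h2
  have hmono : MonotoneOn H (Set.Icc b a) := by
    apply monotoneOn_of_deriv_nonneg (convex_Icc _ _)
    · intro x hx
      rw [Set.mem_Icc] at hx
      exact (hdH x (by linarith)).continuousAt.continuousWithinAt
    · intro x hx
      rw [interior_Icc, Set.mem_Ioo] at hx
      exact (hdH x (by linarith)).differentiableAt.differentiableWithinAt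
    · intro x hx
      rw [interior_Icc, Set.mem_Ioo] at hx
      rw [(hdH x (by linarith)).deriv]
      have := tangent hm0 (by linarith : (0:ℝ) < x)
      linarith
  have h := hmono (Set.mem_Icc.mpr ⟨le_refl b, hba.le⟩) (Set.mem_Icc.mpr ⟨hba.le, le_refl a⟩) hba.le
  rw [hH] at h
  simp only at h
  have hq : (a - m) ^ 2 = (b - m) ^ 2 := by rw [hm]; ring
  have hq2 : J2 m / 2 * (a - m) ^ 2 = J2 m / 2 * (b - m) ^ 2 := by rw [hq]
  linarith [h, hq2]

lemma gm_ineq {a b : ℝ} (hb : 0 < b) (hba : b ≤ a) (ha7 : a < Real.sqrt 7) :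
    J1 a * J1 b ≤ J1 ((a + b) / 2) ^ 2 := by
  rcases eq_or_lt_of_le hba with rfl | hlt
  · rw [show (b + b) / 2 = b by ring, sq]
  set m : ℝ := (a + b) / 2 with hm
  set d : ℝ := (a - b) / 2 with hd
  have hd0 : 0 < d := by rw [hd]; linarith
  have hma : m + d = a := by rw [hm, hd]; ring
  have hmb : m - d = b := by rw [hm, hd]; ring
  have hJpos : ∀ s : ℝ, s ∈ Set.Icc 0 d → 0 < J1 (m + s) ∧ 0 < J1 (m - s) := by
    intro s hs
    rw [Set.mem_Icc] at hs
    constructor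
    · apply J1_pos; rw [hm]; linarith
    · apply J1_pos; rw [hm]; linarith [hs.2]
  have hdψ : ∀ s : ℝ, s ∈ Set.Icc 0 d →
      HasDerivAt (fun s => Real.log (J1 (m + s)) + Real.log (J1 (m - s)))
        (J2 (m + s) / J1 (m + s) - J2 (m - s) / J1 (m - s)) s := by
    intro s hs
    rw [Set.mem_Icc] at hs
    have hp : (0:ℝ) < m + s := by rw [hm]; linarith
    have hq : (0:ℝ) < m - s := by rw [hm]; linarith [hs.2]
    have h1 : HasDerivAt (fun s : ℝ => J1 (m + s)) (J2 (m + s)) s := by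
      have := (hd_J1 hp.ne').comp s ((hasDerivAt_id s).const_add m)
      exact this.congr_deriv (by ring)
    have h2 : HasDerivAt (fun s : ℝ => J1 (m - s)) (-J2 (m - s)) s := by
      have := (hd_J1 hq.ne').comp s ((hasDerivAt_id s).const_sub m)
      exact this.congr_deriv (by ring)
    have hl1 := h1.log (J1_pos hp).ne'
    have hl2 := h2.log (J1_pos hq).ne'
    have := hl1.add hl2
    exact this.congr_deriv (by ring)
  have hanti : AntitoneOn (fun s => Real.log (J1 (m + s)) + Real.log (J1 (m - s)))
      (Set.Icc 0 d) := by
    apply antitoneOn_of_deriv_nonpos (convex_Icc _ _)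
      (fun s hs => (hdψ s hs).continuousAt.continuousWithinAt)
    · intro s hs
      rw [interior_Icc] at hs
      exact (hdψ s (Set.mem_Icc_of_Ioo hs)).differentiableAt.differentiableWithinAt
    · intro s hs
      rw [interior_Icc] at hs
      rw [(hdψ s (Set.mem_Icc_of_Ioo hs)).deriv]
      rw [Set.mem_Ioo] at hs
      have hp : (0:ℝ) < m - s := by rw [hm]; linarith [hs.2, hd0]
      have hmem1 : m - s ∈ Set.Ioo (0:ℝ) (Real.sqrt 7) := by
        constructor
        · exact hp
        · have : m - s < a := by rw [hm]; linarith [hs.1]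
          linarith
      have hmem2 : m + s ∈ Set.Ioo (0:ℝ) (Real.sqrt 7) := by
        constructor
        · rw [hm]; linarith [hs.1]
        · have hsa : m + s ≤ a := by rw [hm]; linarith [hs.2]
          linarith
      have := r_anti hmem1 hmem2 (by linarith [hs.1])
      linarith
  have h := hanti (Set.mem_Icc.mpr ⟨le_refl 0, hd0.le⟩) (Set.mem_Icc.mpr ⟨hd0.le, le_refl d⟩) hd0.le
  simp only [add_zero, sub_zero] at h
  rw [hma, hmb] at h
  have hpa : 0 < J1 a := J1_pos (by linarith)
  have hpb : 0 < J1 b := J1_pos hb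
  have hpm : 0 < J1 m := J1_pos (by rw [hm]; linarith)
  have hlog : Real.log (J1 a * J1 b) ≤ Real.log (J1 m ^ 2) := by
    rw [Real.log_mul hpa.ne' hpb.ne', Real.log_pow]
    push_cast
    linarith
  exact (Real.log_le_log_iff (mul_pos hpa hpb) (pow_pos hpm 2)).mp hlog

lemma sq_main {a b : ℝ} (hb : 0 < b) (hba : b ≤ a) (ha7 : a < Real.sqrt 7) :
    (a - b) ^ 2 * (J1 a * J1 b) ≤ (J0 a - J0 b) ^ 2 := by
  rcases eq_or_lt_of_le hba with rfl | hlt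
  · simp
  · have h1 := midpoint_ineq hb hlt
    have h2 := gm_ineq hb hba ha7
    have hm : 0 < J1 ((a + b) / 2) := J1_pos (by linarith)
    calc (a - b) ^ 2 * (J1 a * J1 b) ≤ (a - b) ^ 2 * J1 ((a + b) / 2) ^ 2 :=
          mul_le_mul_of_nonneg_left h2 (sq_nonneg _)
      _ = (J1 ((a + b) / 2) * (a - b)) ^ 2 := by ring
      _ ≤ (J0 a - J0 b) ^ 2 :=
          pow_le_pow_left₀ (mul_nonneg hm.le (by linarith)) h1 2

theorem vanDerCorput_nu_half (a b : ℝ) (ha : 0 < a) (hb : 0 < b)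
    (ha7 : a < Real.sqrt 7) (hb7 : b < Real.sqrt 7) :
    3 * |Real.sinh a / a - Real.sinh b / b| ≥
      |a - b| * Real.sqrt (a * b * (3 * (Real.cosh a / a ^ 2 - Real.sinh a / a ^ 3)) *
        (3 * (Real.cosh b / b ^ 2 - Real.sinh b / b ^ 3))) := by
  have key : ∀ x z : ℝ, 0 < z → z ≤ x → x < Real.sqrt 7 →
      |x - z| * Real.sqrt (J1 x * J1 z) ≤ |J0 x - J0 z| := by
    intro x z hz hzx hx7
    have hsq := sq_main hz hzx hx7
    have h1 : |J0 x - J0 z| = Real.sqrt ((J0 x - J0 z) ^ 2) := (Real.sqrt_sq_eq_abs _).symm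
    have h2 : Real.sqrt ((x - z) ^ 2 * (J1 x * J1 z)) = |x - z| * Real.sqrt (J1 x * J1 z) := by
      rw [Real.sqrt_mul (sq_nonneg _), Real.sqrt_sq_eq_abs]
    rw [h1, ← h2]
    exact Real.sqrt_le_sqrt hsq
  have h9 : a * b * (3 * (Real.cosh a / a ^ 2 - Real.sinh a / a ^ 3)) *
      (3 * (Real.cosh b / b ^ 2 - Real.sinh b / b ^ 3)) = 9 * (J1 a * J1 b) := by
    unfold J1
    field_simp
    ring
  rw [h9]
  have hs9 : Real.sqrt (9 * (J1 a * J1 b)) = 3 * Real.sqrt (J1 a * J1 b) := by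
    rw [show (9:ℝ) = 3 ^ 2 by norm_num, Real.sqrt_mul (by positivity), Real.sqrt_sq (by norm_num)]
  rw [hs9]
  have habs : |a - b| * Real.sqrt (J1 a * J1 b) ≤ |J0 a - J0 b| := by
    rcases le_total b a with h | h
    · exact key a b hb h ha7
    · have := key b a ha h hb7
      rwa [abs_sub_comm, mul_comm (J1 b) (J1 a), abs_sub_comm (J0 b)] at this
  have hJ0 : |Real.sinh a / a - Real.sinh b / b| = |J0 a - J0 b| := rfl
  rw [ge_iff_le, hJ0]
  linarith [habs]
end
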